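/- arXiv:2211.12790 — 2 statements merged into one kernel-verified Lean document; each statement's English description precedes it below -/
import Mathlib

section
/- Let 𝔄 be a finite-dimensional C*-algebra and Φ : 𝔄 → 𝔄 a positive linear map such that Φ ∘ Φ is strictly positive (i.e., Φ²(R) is positive and invertible for every nonzero positive R). If T ∈ 𝔄 is a nonzero positive element and λ ∈ ℂ satisfies Φ(T) = λT, then T is invertible (strictly positive) and λ is a real number with λ > 0. -/
/-- Let `𝔄` be a finite-dimensional C*-algebra and `Φ : 𝔄 → 𝔄` a positive linear map such that
`Φ ∘ Φ` is strictly positive (i.e. `Φ²(R)` is positive and invertible for every nonzero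
positive `R`). If `T` is a nonzero positive element and `Φ T = λ T` for some `λ ∈ ℂ`, then `T`
is invertible (strictly positive) and `λ` is a real number with `λ > 0`. -/
theorem eigenvalue_of_square_strictly_positive
    {A : Type*} [NormedRing A] [StarRing A] [CStarRing A]
    [NormedAlgebra ℂ A] [StarModule ℂ A] [FiniteDimensional ℂ A]
    (Φ : A →ₗ[ℂ] A)
    (hpos : ∀ a : A, (∃ s : A, a = star s * s) → ∃ s : A, Φ a = star s * s)
    (hsq : ∀ a : A, (∃ s : A, a = star s * s) → a ≠ 0 →
      (∃ s : A, Φ (Φ a) = star s * s) ∧ IsUnit (Φ (Φ a)))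
    (T : A) (hT : ∃ s : A, T = star s * s) (hT0 : T ≠ 0)
    (l : ℂ) (hEig : Φ T = l • T) :
    IsUnit T ∧ l.im = 0 ∧ 0 < l.re := by
  haveI : CompleteSpace A := FiniteDimensional.complete ℂ A
  letI : CStarAlgebra A :=
    { ‹NormedRing A›, ‹StarRing A›, ‹CStarRing A›, ‹NormedAlgebra ℂ A›, ‹StarModule ℂ A›,
      ‹CompleteSpace A› with }
  have hnt : Nontrivial A := nontrivial_of_ne T 0 hT0
  obtain ⟨s, hs⟩ := hT
  have hTsa : IsSelfAdjoint T := hs ▸ IsSelfAdjoint.star_mul_self s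
  -- the eigenvalue is real
  obtain ⟨r, hr⟩ := hpos T ⟨s, hs⟩
  have hsa2 : IsSelfAdjoint (Φ T) := hr ▸ IsSelfAdjoint.star_mul_self r
  have hconj : star l = l := by
    have h := hsa2
    rw [hEig, IsSelfAdjoint, star_smul, hTsa.star_eq] at h
    have h2 : (star l - l) • T = 0 := by rw [sub_smul, h, sub_self]
    rcases smul_eq_zero.mp h2 with h3 | h3
    · exact sub_eq_zero.mp h3
    · exact absurd h3 hT0
  have him : l.im = 0 := by
    have := congrArg Complex.im hconj
    rw [Complex.star_def, Complex.conj_im] at this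
    linarith
  -- Φ² T = l² T is a unit
  have hΦΦ := hsq T ⟨s, hs⟩ hT0
  have hl2 : Φ (Φ T) = (l * l) • T := by rw [hEig, map_smul, hEig, smul_smul]
  rw [hl2] at hΦΦ
  have hl0 : l ≠ 0 := by
    rintro rfl
    rw [zero_mul, zero_smul] at hΦΦ
    exact not_isUnit_zero hΦΦ.2
  have hll : l * l ≠ 0 := mul_ne_zero hl0 hl0
  have hTu : IsUnit T := by
    have := hΦΦ.2
    rw [show (l * l) • T = (Units.mk0 (l * l) hll : ℂ) • T from rfl,
      ← Units.smul_def, isUnit_smul_iff] at this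
    exact this
  refine ⟨hTu, him, ?_⟩
  -- positivity of the eigenvalue
  by_contra hle
  push_neg at hle
  have hre : l.re ≠ 0 := fun h => hl0 (Complex.ext h him)
  have hlt : l.re < 0 := lt_of_le_of_ne hle hre
  have hlre : l = (l.re : ℂ) := Complex.ext rfl (by simp [him])
  -- -(Φ T) is also positive
  set w : A := ((Real.sqrt (-l.re) : ℂ)) • s with hw
  have hwT : star w * w = -(Φ T) := by
    rw [hw, star_smul, smul_mul_smul_comm, ← hs, hEig]
    rw [← neg_smul]
    congr 1
    have hst : star ((Real.sqrt (-l.re) : ℂ)) = (Real.sqrt (-l.re) : ℂ) := by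
      simp [Complex.star_def, Complex.conj_ofReal]
    rw [hst, ← Complex.ofReal_mul, Real.mul_self_sqrt (by linarith)]
    rw [hlre]
    simp
  have h1 : ∀ y ∈ spectrum ℝ (Φ T), 0 ≤ y := hr ▸ spectrum_star_mul_self_nonneg
  have h2 : ∀ y ∈ spectrum ℝ (-(Φ T)), 0 ≤ y := hwT ▸ spectrum_star_mul_self_nonneg
  have hzero : Φ T = 0 :=
    SpectrumRestricts.eq_zero_of_neg hsa2 (SpectrumRestricts.nnreal_iff.mpr h1)
      (SpectrumRestricts.nnreal_iff.mpr h2)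
  rw [hEig] at hzero
  rcases smul_eq_zero.mp hzero with h3 | h3
  · exact hl0 h3
  · exact hT0 h3
end

section
/- Let H be a finite-dimensional complex Hilbert space, m : H ⊗ H → H an associative linear map with two-sided unit vector v, and suppose m m* = λ · id_H for some scalar λ (specialness). Then m satisfies the Frobenius relations: (m ⊗ 1) ∘ (1 ⊗ m*) = m* ∘ m = (1 ⊗ m) ∘ (m* ⊗ 1), where the implicit identifications use the canonical associator of the tensor product of Hilbert spaces. -/
open scoped InnerProductSpace
set_option maxHeartbeats 1000000

private lemma inner_ext_span {E : Type*} [NormedAddCommGroup E] [InnerProductSpace ℂ E]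
    {S : Set E} (hS : Submodule.span ℂ S = ⊤) {x y : E}
    (h : ∀ s ∈ S, ⟪s, x⟫_ℂ = ⟪s, y⟫_ℂ) : x = y := by
  refine ext_inner_left ℂ (fun w => ?_)
  have hw : w ∈ Submodule.span ℂ S := hS ▸ Submodule.mem_top
  induction hw using Submodule.span_induction with
  | mem z hz => exact h z hz
  | zero => simp
  | add a b ha hb hpa hpb => simp only [inner_add_left, hpa, hpb]
  | smul c a ha hpa => simp only [inner_smul_left, hpa]

/-- Let `H` be a finite-dimensional complex Hilbert space, `m : H ⊗ H → H` an associative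
linear map with two-sided unit vector `v`, satisfying specialness `m m* = λ · id`.
Then `m` satisfies the Frobenius relations `(m ⊗ 1) ∘ (1 ⊗ m*) = m* ∘ m = (1 ⊗ m) ∘ (m* ⊗ 1)`.
Here `H ⊗ H` is modelled by `T`, `tp`, and the triple tensor product (with the canonical
associator identification built in) by `T3` with structure maps `tp3 : (H⊗H)⊗H`-style and
`tp3' : H⊗(H⊗H)`-style; `M1` is the map `m ⊗ 1 : T3 → T` and `N1` is `1 ⊗ m : T3 → T`. -/
theorem special_implies_frobenius
    {H T T3 : Type*} [NormedAddCommGroup H] [InnerProductSpace ℂ H] [FiniteDimensional ℂ H]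
    [NormedAddCommGroup T] [InnerProductSpace ℂ T] [FiniteDimensional ℂ T]
    [NormedAddCommGroup T3] [InnerProductSpace ℂ T3] [FiniteDimensional ℂ T3]
    (tp : H →ₗ[ℂ] H →ₗ[ℂ] T)
    (htp : ∀ x y x' y' : H, ⟪tp x y, tp x' y'⟫_ℂ = ⟪x, x'⟫_ℂ * ⟪y, y'⟫_ℂ)
    (hspan : Submodule.span ℂ (Set.range fun p : H × H => tp p.1 p.2) = ⊤)
    (tp3 : T →ₗ[ℂ] H →ₗ[ℂ] T3)
    (htp3 : ∀ (s s' : T) (z z' : H), ⟪tp3 s z, tp3 s' z'⟫_ℂ = ⟪s, s'⟫_ℂ * ⟪z, z'⟫_ℂ)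
    (hspan3 : Submodule.span ℂ (Set.range fun p : T × H => tp3 p.1 p.2) = ⊤)
    (tp3' : H →ₗ[ℂ] T →ₗ[ℂ] T3)
    -- the canonical associator identification
    (hassoc_id : ∀ x y z : H, tp3 (tp x y) z = tp3' x (tp y z))
    (m : T →ₗ[ℂ] H) (v : H)
    (hassoc : ∀ x y z : H, m (tp (m (tp x y)) z) = m (tp x (m (tp y z))))
    (hunit_left : ∀ x : H, m (tp v x) = x)
    (hunit_right : ∀ x : H, m (tp x v) = x)
    (lam : ℂ)
    -- specialness: m m* = λ id
    (hspecial : m ∘ₗ LinearMap.adjoint m = lam • LinearMap.id)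
    (M1 : T3 →ₗ[ℂ] T) (hM1 : ∀ (s : T) (z : H), M1 (tp3 s z) = tp (m s) z)
    (N1 : T3 →ₗ[ℂ] T) (hN1 : ∀ (x : H) (s : T), N1 (tp3' x s) = tp x (m s)) :
    M1 ∘ₗ LinearMap.adjoint N1 = LinearMap.adjoint m ∘ₗ m ∧
    N1 ∘ₗ LinearMap.adjoint M1 = LinearMap.adjoint m ∘ₗ m := by
  rcases subsingleton_or_nontrivial H with hH | hH
  · -- trivial case : H = 0, hence T = 0
    have hT0 : ∀ t : T, t = 0 := by
      intro t
      have hsub : (Set.range fun p : H × H => tp p.1 p.2) ⊆ (↑(⊥ : Submodule ℂ T) : Set T) := by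
        rintro _ ⟨⟨a, b⟩, rfl⟩
        have ha : a = 0 := Subsingleton.elim _ _
        simp [ha]
      have : Submodule.span ℂ (Set.range fun p : H × H => tp p.1 p.2) ≤ ⊥ :=
        Submodule.span_le.mpr hsub
      rw [hspan] at this
      simpa using this Submodule.mem_top
    constructor <;>
      · apply LinearMap.ext; intro t
        rw [hT0 t]; simp
  · -- main case
    haveI := hH
    have hm : ∀ x : H, m (LinearMap.adjoint m x) = lam • x := by
      intro x; have := LinearMap.congr_fun hspecial x; simpa using this
    have hdr : ∀ (t : T) (a : H), ⟪t, LinearMap.adjoint m a⟫_ℂ = ⟪m t, a⟫_ℂ := by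
      intro t a; exact LinearMap.adjoint_inner_right m t a
    -- operators
    let rr : H → (H →ₗ[ℂ] H) := fun y => m ∘ₗ tp.flip y
    let rho : H → (T →ₗ[ℂ] T) := fun y => N1 ∘ₗ tp3.flip y
    let Lm : H → (T →ₗ[ℂ] T) := fun z => M1 ∘ₗ tp3' z
    let ll : H → (H →ₗ[ℂ] H) := fun z => m ∘ₗ tp z
    have rr_ap : ∀ y x, rr y x = m (tp x y) := fun y x => rfl
    have rho_ap0 : ∀ y s, rho y s = N1 (tp3 s y) := fun y s => rfl
    have Lm_ap0 : ∀ z t, Lm z t = M1 (tp3' z t) := fun z t => rfl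
    have ll_ap : ∀ z x, ll z x = m (tp z x) := fun z x => rfl
    have rho_ap : ∀ y a b, rho y (tp a b) = tp a (m (tp b y)) := by
      intro y a b; rw [rho_ap0, hassoc_id, hN1]
    have Lm_ap : ∀ z a b, Lm z (tp a b) = tp (m (tp z a)) b := by
      intro z a b; rw [Lm_ap0, ← hassoc_id, hM1]
    -- associativity, operator form
    have P3 : ∀ y, m ∘ₗ rho y = rr y ∘ₗ m := by
      intro y
      apply LinearMap.ext_on hspan
      rintro _ ⟨⟨a, b⟩, rfl⟩
      simp only [LinearMap.comp_apply]
      rw [rho_ap, rr_ap]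
      exact (hassoc a b y).symm
    have P4 : ∀ y, (LinearMap.adjoint (rho y)) ∘ₗ LinearMap.adjoint m
        = LinearMap.adjoint m ∘ₗ LinearMap.adjoint (rr y) := by
      intro y
      calc LinearMap.adjoint (rho y) ∘ₗ LinearMap.adjoint m
          = LinearMap.adjoint (m ∘ₗ rho y) := (LinearMap.adjoint_comp m (rho y)).symm
        _ = LinearMap.adjoint (rr y ∘ₗ m) := by rw [P3]
        _ = LinearMap.adjoint m ∘ₗ LinearMap.adjoint (rr y) := LinearMap.adjoint_comp (rr y) m
    -- adjoint of tp z
    have A_u : ∀ z c e, LinearMap.adjoint (tp z) (tp c e) = ⟪z, c⟫_ℂ • e := by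
      intro z c e
      refine ext_inner_left ℂ (fun w => ?_)
      rw [LinearMap.adjoint_inner_right, htp, inner_smul_right]
    -- adjoint of M1
    have P14 : ∀ a b, LinearMap.adjoint M1 (tp a b) = tp3 (LinearMap.adjoint m a) b := by
      intro a b
      apply inner_ext_span hspan3
      rintro _ ⟨⟨s, z⟩, rfl⟩
      rw [LinearMap.adjoint_inner_right, hM1, htp, htp3, hdr s a]
    have P20 : M1 ∘ₗ LinearMap.adjoint M1 = lam • (LinearMap.id : T →ₗ[ℂ] T) := by
      apply LinearMap.ext_on hspan
      rintro _ ⟨⟨a, b⟩, rfl⟩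
      simp only [LinearMap.comp_apply, LinearMap.smul_apply, LinearMap.id_apply]
      rw [P14, hM1, hm]
      rw [map_smul, LinearMap.smul_apply]
    -- inner product rule for tp3'
    have L1 : ∀ (z c : H) (t s : T), ⟪tp3' z t, tp3' c s⟫_ℂ = ⟪z, c⟫_ℂ * ⟪t, s⟫_ℂ := by
      intro z c t s
      have ht : t ∈ Submodule.span ℂ (Set.range fun p : H × H => tp p.1 p.2) :=
        hspan ▸ Submodule.mem_top
      induction ht using Submodule.span_induction with
      | mem t' h => ?_
      | zero => simp
      | add a b ha hb hpa hpb => simp only [map_add, inner_add_left, hpa, hpb, mul_add]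
      | smul c' a ha hpa =>
          simp only [map_smul, inner_smul_left, hpa]; ring
      obtain ⟨⟨p, q⟩, rfl⟩ := h
      have hs : s ∈ Submodule.span ℂ (Set.range fun p : H × H => tp p.1 p.2) :=
        hspan ▸ Submodule.mem_top
      induction hs using Submodule.span_induction with
      | mem s' h' => ?_
      | zero => simp
      | add a b ha hb hpa hpb => simp only [map_add, inner_add_right, hpa, hpb, mul_add]
      | smul c' a ha hpa =>
          simp only [map_smul, inner_smul_right, hpa]; ring
      obtain ⟨⟨a, b⟩, rfl⟩ := h'
      rw [← hassoc_id, ← hassoc_id, htp3, htp, htp]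
      ring
    have A3 : ∀ (z a : H) (s : T),
        LinearMap.adjoint (tp3' z) (tp3' a s) = ⟪z, a⟫_ℂ • s := by
      intro z a s
      refine ext_inner_left ℂ (fun t => ?_)
      rw [LinearMap.adjoint_inner_right, L1, inner_smul_right]
    -- orthonormal basis
    set bb := stdOrthonormalBasis ℂ H with hbb
    have hONB : ∀ a : H, (∑ j, ⟪bb j, a⟫_ℂ • bb j) = a := fun a => bb.sum_repr' a
    -- Parseval on T
    have P12 : ∀ s : T, (∑ j, tp (bb j) (LinearMap.adjoint (tp (bb j)) s)) = s := by
      intro s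
      have hs : s ∈ Submodule.span ℂ (Set.range fun p : H × H => tp p.1 p.2) :=
        hspan ▸ Submodule.mem_top
      induction hs using Submodule.span_induction with
      | mem s' h' => ?_
      | zero => simp
      | add a b ha hb hpa hpb => simp only [map_add, Finset.sum_add_distrib, hpa, hpb]
      | smul c' a ha hpa => simp only [map_smul, ← Finset.smul_sum, hpa]
      obtain ⟨⟨c, e⟩, rfl⟩ := h'
      have hterm : ∀ j, tp (bb j) (LinearMap.adjoint (tp (bb j)) (tp c e))
          = ⟪bb j, c⟫_ℂ • (tp.flip e) (bb j) := by
        intro j; rw [A_u, map_smul]; rfl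
      calc (∑ j, tp (bb j) (LinearMap.adjoint (tp (bb j)) (tp c e)))
          = ∑ j, (tp.flip e) (⟪bb j, c⟫_ℂ • bb j) := by
            refine Finset.sum_congr rfl (fun j _ => ?_)
            rw [hterm j, map_smul]
        _ = (tp.flip e) (∑ j, ⟪bb j, c⟫_ℂ • bb j) := (map_sum _ _ _).symm
        _ = tp c e := by rw [hONB]; rfl
    -- Parseval on T3
    have P19 : ∀ x : T3, (∑ j, tp3' (bb j) (LinearMap.adjoint (tp3' (bb j)) x)) = x := by
      intro x
      have hx : x ∈ Submodule.span ℂ (Set.range fun p : T × H => tp3 p.1 p.2) :=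
        hspan3 ▸ Submodule.mem_top
      induction hx using Submodule.span_induction with
      | mem w h => ?_
      | zero => simp
      | add a b ha hb hpa hpb => simp only [map_add, Finset.sum_add_distrib, hpa, hpb]
      | smul c' a ha hpa => simp only [map_smul, ← Finset.smul_sum, hpa]
      obtain ⟨⟨s, z⟩, rfl⟩ := h
      show (∑ j, tp3' (bb j) (LinearMap.adjoint (tp3' (bb j)) (tp3 s z))) = tp3 s z
      have hs : s ∈ Submodule.span ℂ (Set.range fun p : H × H => tp p.1 p.2) :=
        hspan ▸ Submodule.mem_top
      induction hs using Submodule.span_induction with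
      | mem s' h' => ?_
      | zero => simp
      | add a b ha hb hpa hpb =>
          simp only [map_add, LinearMap.add_apply, Finset.sum_add_distrib, hpa, hpb]
      | smul c' a ha hpa =>
          simp only [map_smul, LinearMap.smul_apply, ← Finset.smul_sum, hpa]
      obtain ⟨⟨a, b⟩, rfl⟩ := h'
      show (∑ j, tp3' (bb j) (LinearMap.adjoint (tp3' (bb j)) (tp3 (tp a b) z))) = tp3 (tp a b) z
      rw [hassoc_id]
      calc (∑ j, tp3' (bb j) (LinearMap.adjoint (tp3' (bb j)) (tp3' a (tp b z))))
          = ∑ j, (tp3'.flip (tp b z)) (⟪bb j, a⟫_ℂ • bb j) := by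
            refine Finset.sum_congr rfl (fun j _ => ?_)
            rw [A3, map_smul, map_smul]; rfl
        _ = (tp3'.flip (tp b z)) (∑ j, ⟪bb j, a⟫_ℂ • bb j) := (map_sum _ _ _).symm
        _ = tp3' a (tp b z) := by rw [hONB]; rfl
    -- sum of Lm (bb j) ∘ adjoint
    have hLmsum : ∀ w : T, (∑ j, Lm (bb j) (LinearMap.adjoint (Lm (bb j)) w)) = lam • w := by
      intro w
      have hadj : ∀ z : H, LinearMap.adjoint (Lm z)
          = LinearMap.adjoint (tp3' z) ∘ₗ LinearMap.adjoint M1 :=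
        fun z => LinearMap.adjoint_comp M1 (tp3' z)
      calc (∑ j, Lm (bb j) (LinearMap.adjoint (Lm (bb j)) w))
          = ∑ j, M1 (tp3' (bb j)
              (LinearMap.adjoint (tp3' (bb j)) (LinearMap.adjoint M1 w))) := by
            refine Finset.sum_congr rfl (fun j _ => ?_)
            rw [hadj, Lm_ap0]; rfl
        _ = M1 (∑ j, tp3' (bb j)
              (LinearMap.adjoint (tp3' (bb j)) (LinearMap.adjoint M1 w))) := (map_sum _ _ _).symm
        _ = M1 (LinearMap.adjoint M1 w) := by rw [P19]
        _ = lam • w := by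
            have := LinearMap.congr_fun P20 w
            simpa using this
    -- adjoint of Lm
    have P6 : ∀ z a b, LinearMap.adjoint (Lm z) (tp a b)
        = tp (LinearMap.adjoint (ll z) a) b := by
      intro z a b
      apply inner_ext_span hspan
      rintro _ ⟨⟨p, q⟩, rfl⟩
      rw [LinearMap.adjoint_inner_right, Lm_ap, htp, htp]
      congr 1
      rw [LinearMap.adjoint_inner_right]
      rfl
    -- rho commutes with adjoint (Lm z)
    have P17 : ∀ y z, (rho y) ∘ₗ LinearMap.adjoint (Lm z)
        = LinearMap.adjoint (Lm z) ∘ₗ rho y := by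
      intro y z
      apply LinearMap.ext_on hspan
      rintro _ ⟨⟨a, b⟩, rfl⟩
      simp only [LinearMap.comp_apply]
      rw [P6, rho_ap, rho_ap, P6]
    -- rr intertwines adjoint (tp z) and rho
    have P16 : ∀ y z, (rr y) ∘ₗ LinearMap.adjoint (tp z)
        = LinearMap.adjoint (tp z) ∘ₗ rho y := by
      intro y z
      apply LinearMap.ext_on hspan
      rintro _ ⟨⟨c, e⟩, rfl⟩
      simp only [LinearMap.comp_apply]
      rw [A_u, rho_ap, A_u, map_smul]
      rw [rr_ap]
    -- associativity : m ∘ N1 = m ∘ M1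
    have P8 : m ∘ₗ N1 = m ∘ₗ M1 := by
      apply LinearMap.ext_on hspan3
      rintro _ ⟨⟨s, z⟩, rfl⟩
      simp only [LinearMap.comp_apply]
      show m (N1 (tp3 s z)) = m (M1 (tp3 s z))
      have hs : s ∈ Submodule.span ℂ (Set.range fun p : H × H => tp p.1 p.2) :=
        hspan ▸ Submodule.mem_top
      induction hs using Submodule.span_induction with
      | mem s' h' => ?_
      | zero => simp
      | add a b ha hb hpa hpb =>
          simp only [map_add, LinearMap.add_apply, hpa, hpb]
      | smul c' a ha hpa =>
          simp only [map_smul, LinearMap.smul_apply, hpa]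
      obtain ⟨⟨a, b⟩, rfl⟩ := h'
      show m (N1 (tp3 (tp a b) z)) = m (M1 (tp3 (tp a b) z))
      rw [hM1, hassoc_id, hN1]
      exact (hassoc a b z).symm
    -- key coassociativity identity : adjoint m ∘ (tp z)† sends R to (Lm z)† R
    have P7 : ∀ z : H, LinearMap.adjoint m
          (LinearMap.adjoint (tp z) (LinearMap.adjoint m v))
        = LinearMap.adjoint (Lm z) (LinearMap.adjoint m v) := by
      intro z
      refine ext_inner_left ℂ (fun t => ?_)
      rw [LinearMap.adjoint_inner_right m, LinearMap.adjoint_inner_right (tp z)]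
      have h1 : (tp z) (m t) = N1 (tp3' z t) := (hN1 z t).symm
      rw [h1, LinearMap.adjoint_inner_right m]
      have h2 : m (N1 (tp3' z t)) = m (M1 (tp3' z t)) := LinearMap.congr_fun P8 (tp3' z t)
      rw [h2, ← LinearMap.adjoint_inner_right m, ← Lm_ap0, ← LinearMap.adjoint_inner_right (Lm z)]
    -- unit facts
    have huvR : LinearMap.adjoint (tp v) (LinearMap.adjoint m v) = v := by
      refine ext_inner_left ℂ (fun w => ?_)
      rw [LinearMap.adjoint_inner_right (tp v), LinearMap.adjoint_inner_right m, hunit_left]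
    -- multiplicativity of rho
    have P11 : ∀ a b : H, (rho b) ∘ₗ (rho a) = rho (m (tp a b)) := by
      intro a b
      apply LinearMap.ext_on hspan
      rintro _ ⟨⟨c, e⟩, rfl⟩
      simp only [LinearMap.comp_apply]
      rw [rho_ap, rho_ap, rho_ap, hassoc]
    -- facts about lam
    have hdl : ∀ (a : H) (t : T), ⟪LinearMap.adjoint m a, t⟫_ℂ = ⟪a, m t⟫_ℂ := by
      intro a t; exact LinearMap.adjoint_inner_left m t a
    have hdd : ∀ a b : H,
        ⟪LinearMap.adjoint m a, LinearMap.adjoint m b⟫_ℂ = lam * ⟪a, b⟫_ℂ := by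
      intro a b; rw [hdl, hm, inner_smul_right]
    have hvne : v ≠ 0 := by
      intro hv
      obtain ⟨x, hx⟩ := exists_ne (0 : H)
      apply hx
      have := hunit_left x
      rw [hv] at this
      simpa using this.symm
    have hlam_real : (starRingEnd ℂ) lam = lam := by
      have h1 : lam * ⟪v, v⟫_ℂ = ⟪LinearMap.adjoint m v, LinearMap.adjoint m v⟫_ℂ :=
        (hdd v v).symm
      have h2 := congrArg (starRingEnd ℂ) h1
      rw [map_mul, inner_conj_symm, inner_conj_symm] at h2
      rw [← h1] at h2
      exact mul_right_cancel₀ (inner_self_ne_zero.mpr hvne) h2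
    -- THE KEY IDENTITY : rho y (m† v) = m† y
    have key : ∀ y : H, rho y (LinearMap.adjoint m v) = LinearMap.adjoint m y := by
      intro y
      set R := LinearMap.adjoint m v with hR
      set s := rho y R with hs_def
      set g : Fin (Module.finrank ℂ H) → H
        := fun j => LinearMap.adjoint (tp (bb j)) R with hg
      set D : H →ₗ[ℂ] T := (rho y) ∘ₗ LinearMap.adjoint m - LinearMap.adjoint m ∘ₗ (rr y)
        with hDdef
      have hDap : ∀ a : H,
          D a = rho y (LinearMap.adjoint m a) - LinearMap.adjoint m (rr y a) := fun a => rfl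
      have hXj : ∀ j, rho y (LinearMap.adjoint m (g j)) = LinearMap.adjoint (Lm (bb j)) s := by
        intro j
        show rho y (LinearMap.adjoint m (LinearMap.adjoint (tp (bb j)) R))
            = LinearMap.adjoint (Lm (bb j)) s
        rw [P7 (bb j)]
        exact LinearMap.congr_fun (P17 y (bb j)) R
      have hWj : ∀ j, rr y (g j) = LinearMap.adjoint (tp (bb j)) s :=
        fun j => LinearMap.congr_fun (P16 y (bb j)) R
      have hcross : ∀ a : H,
          ⟪rho y (LinearMap.adjoint m a), LinearMap.adjoint m (rr y a)⟫_ℂ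
            = lam * ⟪rr y a, rr y a⟫_ℂ := by
        intro a
        rw [← LinearMap.adjoint_inner_right (rho y) (LinearMap.adjoint m a)
          (LinearMap.adjoint m (rr y a))]
        have h1 : LinearMap.adjoint (rho y) (LinearMap.adjoint m (rr y a))
            = LinearMap.adjoint m (LinearMap.adjoint (rr y) (rr y a)) :=
          LinearMap.congr_fun (P4 y) (rr y a)
        rw [h1, hdd, LinearMap.adjoint_inner_right (rr y)]
      have hterm : ∀ j, ⟪D (g j), D (g j)⟫_ℂ
          = ⟪LinearMap.adjoint (Lm (bb j)) s, LinearMap.adjoint (Lm (bb j)) s⟫_ℂ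
            - lam * ⟪LinearMap.adjoint (tp (bb j)) s, LinearMap.adjoint (tp (bb j)) s⟫_ℂ := by
        intro j
        rw [hDap, inner_sub_sub_self]
        have hXY := hcross (g j)
        have hQconj : (starRingEnd ℂ) ⟪rr y (g j), rr y (g j)⟫_ℂ = ⟪rr y (g j), rr y (g j)⟫_ℂ :=
          inner_conj_symm _ _
        have hYX : ⟪LinearMap.adjoint m (rr y (g j)), rho y (LinearMap.adjoint m (g j))⟫_ℂ
            = lam * ⟪rr y (g j), rr y (g j)⟫_ℂ := by
          have := congrArg (starRingEnd ℂ) hXY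
          rw [inner_conj_symm, map_mul, hlam_real, hQconj] at this
          exact this
        have hYY : ⟪LinearMap.adjoint m (rr y (g j)), LinearMap.adjoint m (rr y (g j))⟫_ℂ
            = lam * ⟪rr y (g j), rr y (g j)⟫_ℂ := hdd _ _
        rw [hXY, hYX, hYY, hXj, hWj]
        ring
      have hsumX : (∑ j, ⟪LinearMap.adjoint (Lm (bb j)) s, LinearMap.adjoint (Lm (bb j)) s⟫_ℂ)
          = lam * ⟪s, s⟫_ℂ := by
        have h1 : ∀ j, ⟪LinearMap.adjoint (Lm (bb j)) s, LinearMap.adjoint (Lm (bb j)) s⟫_ℂ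
            = ⟪s, Lm (bb j) (LinearMap.adjoint (Lm (bb j)) s)⟫_ℂ := by
          intro j; rw [LinearMap.adjoint_inner_left]
        calc (∑ j, ⟪LinearMap.adjoint (Lm (bb j)) s, LinearMap.adjoint (Lm (bb j)) s⟫_ℂ)
            = ∑ j, ⟪s, Lm (bb j) (LinearMap.adjoint (Lm (bb j)) s)⟫_ℂ :=
              Finset.sum_congr rfl (fun j _ => h1 j)
          _ = ⟪s, ∑ j, Lm (bb j) (LinearMap.adjoint (Lm (bb j)) s)⟫_ℂ :=
              (inner_sum _ _ _).symm
          _ = lam * ⟪s, s⟫_ℂ := by rw [hLmsum, inner_smul_right]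
      have hsumQ : (∑ j, ⟪LinearMap.adjoint (tp (bb j)) s, LinearMap.adjoint (tp (bb j)) s⟫_ℂ)
          = ⟪s, s⟫_ℂ := by
        have h1 : ∀ j, ⟪LinearMap.adjoint (tp (bb j)) s, LinearMap.adjoint (tp (bb j)) s⟫_ℂ
            = ⟪s, tp (bb j) (LinearMap.adjoint (tp (bb j)) s)⟫_ℂ := by
          intro j; rw [LinearMap.adjoint_inner_left]
        calc (∑ j, ⟪LinearMap.adjoint (tp (bb j)) s, LinearMap.adjoint (tp (bb j)) s⟫_ℂ)
            = ∑ j, ⟪s, tp (bb j) (LinearMap.adjoint (tp (bb j)) s)⟫_ℂ :=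
              Finset.sum_congr rfl (fun j _ => h1 j)
          _ = ⟪s, ∑ j, tp (bb j) (LinearMap.adjoint (tp (bb j)) s)⟫_ℂ :=
              (inner_sum _ _ _).symm
          _ = ⟪s, s⟫_ℂ := by rw [P12]
      have hsum : (∑ j, ⟪D (g j), D (g j)⟫_ℂ) = 0 := by
        calc (∑ j, ⟪D (g j), D (g j)⟫_ℂ)
            = (∑ j, ⟪LinearMap.adjoint (Lm (bb j)) s, LinearMap.adjoint (Lm (bb j)) s⟫_ℂ)
              - lam * (∑ j, ⟪LinearMap.adjoint (tp (bb j)) s,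
                  LinearMap.adjoint (tp (bb j)) s⟫_ℂ) := by
              rw [Finset.mul_sum, ← Finset.sum_sub_distrib]
              exact Finset.sum_congr rfl (fun j _ => hterm j)
          _ = 0 := by rw [hsumX, hsumQ]; ring
      have hDg : ∀ j, D (g j) = 0 := by
        have hre : (∑ j, (‖D (g j)‖ ^ 2 : ℝ)) = 0 := by
          have h1 : ((∑ j, (‖D (g j)‖ ^ 2 : ℝ) : ℝ) : ℂ) = 0 := by
            push_cast
            rw [← hsum]
            exact Finset.sum_congr rfl (fun j _ => by
              rw [inner_self_eq_norm_sq_to_K]; norm_cast)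
          exact_mod_cast h1
        intro j
        have h2 : (‖D (g j)‖ ^ 2 : ℝ) = 0 := by
          have := (Finset.sum_eq_zero_iff_of_nonneg
            (fun j _ => sq_nonneg (‖D (g j)‖))).mp hre j (Finset.mem_univ j)
          exact this
        have h3 : ‖D (g j)‖ = 0 := by
          have := sq_eq_zero_iff.mp h2
          exact this
        exact norm_eq_zero.mp h3
      -- v is a combination of the g j
      have hv_repr : v = ∑ j, (starRingEnd ℂ) ⟪bb j, v⟫_ℂ • g j := by
        have step2 : tp v = ∑ j, ⟪bb j, v⟫_ℂ • tp (bb j) := by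
          conv_lhs => rw [← hONB v]
          rw [map_sum]
          exact Finset.sum_congr rfl (fun j _ => by rw [map_smul])
        have step3 : LinearMap.adjoint (tp v)
            = ∑ j, (starRingEnd ℂ) ⟪bb j, v⟫_ℂ • LinearMap.adjoint (tp (bb j)) := by
          rw [step2, map_sum]
          exact Finset.sum_congr rfl (fun j _ => by
            rw [LinearEquiv.map_smulₛₗ])
        have step4 := congrArg (fun (f : T →ₗ[ℂ] H) => f R) step3
        simp only [LinearMap.sum_apply, LinearMap.smul_apply] at step4
        rw [huvR] at step4
        exact step4
      have hDv : D v = 0 := by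
        rw [hv_repr, map_sum]
        refine Finset.sum_eq_zero (fun j _ => ?_)
        rw [map_smul, hDg j, smul_zero]
      have h5 := hDap v
      rw [hDv] at h5
      have h6 : rho y (LinearMap.adjoint m v) = LinearMap.adjoint m (rr y v) := by
        have := sub_eq_zero.mp h5.symm
        exact this
      show rho y (LinearMap.adjoint m v) = LinearMap.adjoint m y
      rw [h6, rr_ap, hunit_left]
    -- Frobenius relation 2
    have F2 : N1 ∘ₗ LinearMap.adjoint M1 = LinearMap.adjoint m ∘ₗ m := by
      apply LinearMap.ext_on hspan
      rintro _ ⟨⟨a, b⟩, rfl⟩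
      simp only [LinearMap.comp_apply]
      rw [P14]
      have h1 : N1 (tp3 (LinearMap.adjoint m a) b) = rho b (LinearMap.adjoint m a) :=
        (rho_ap0 b _).symm
      rw [h1, ← key a]
      have h2 : rho b (rho a (LinearMap.adjoint m v))
          = rho (m (tp a b)) (LinearMap.adjoint m v) :=
        LinearMap.congr_fun (P11 a b) _
      rw [h2, key]
    -- Frobenius relation 1, by taking adjoints
    have F1 : M1 ∘ₗ LinearMap.adjoint N1 = LinearMap.adjoint m ∘ₗ m := by
      calc M1 ∘ₗ LinearMap.adjoint N1
          = LinearMap.adjoint (N1 ∘ₗ LinearMap.adjoint M1) := by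
            rw [LinearMap.adjoint_comp, LinearMap.adjoint_adjoint]
        _ = LinearMap.adjoint (LinearMap.adjoint m ∘ₗ m) := by rw [F2]
        _ = LinearMap.adjoint m ∘ₗ m := by
            rw [LinearMap.adjoint_comp, LinearMap.adjoint_adjoint]
    exact ⟨F1, F2⟩
end
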